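/- Let (G,I,O,λ) be a labelled open graph and let G' be the induced subgraph of G on V ∖ (I∩O). Then (G,I,O,λ) has a Pauli flow if and only if (G', I∖O, O∖I, λ) has a Pauli flow (note λ is defined on O̅ which is disjoint from I∩O, so it restricts appropriately). -/
import Mathlib


inductive MLabel | X | Y | Z | XY | XZ | YZ
deriving DecidableEq

open Finset

variable {V : Type} [Fintype V] [DecidableEq V]

/-- The odd neighbourhood of a set of vertices. -/
def Odds (G : SimpleGraph V) [DecidableRel G.Adj] (A : Finset V) : Finset V :=
  Finset.univ.filter fun v => Odd (A ∩ G.neighborFinset v).card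

/-- Pauli flow conditions (P1)-(P9) for a labelled open graph. -/
structure PauliFlow (G : SimpleGraph V) [DecidableRel G.Adj]
    (I O : Finset V) (lam : V → MLabel) (c : V → Finset V) (prec : V → V → Prop) : Prop where
  irrefl : ∀ u, ¬ prec u u
  trans : ∀ u v w, prec u v → prec v w → prec u w
  csub : ∀ u, u ∉ O → ∀ v ∈ c u, v ∉ I
  P1 : ∀ u, u ∉ O → ∀ v ∈ c u, v ∉ O → u ≠ v →
      lam v ≠ MLabel.X → lam v ≠ MLabel.Y → prec u v
  P2 : ∀ u, u ∉ O → ∀ v ∈ Odds G (c u), v ∉ O → u ≠ v →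
      lam v ≠ MLabel.Y → lam v ≠ MLabel.Z → prec u v
  P3 : ∀ u, u ∉ O → ∀ v, v ∉ O → ¬ prec u v → u ≠ v → lam v = MLabel.Y →
      (v ∈ c u ↔ v ∈ Odds G (c u))
  P4 : ∀ u, u ∉ O → lam u = MLabel.XY → u ∉ c u ∧ u ∈ Odds G (c u)
  P5 : ∀ u, u ∉ O → lam u = MLabel.XZ → u ∈ c u ∧ u ∈ Odds G (c u)
  P6 : ∀ u, u ∉ O → lam u = MLabel.YZ → u ∈ c u ∧ u ∉ Odds G (c u)
  P7 : ∀ u, u ∉ O → lam u = MLabel.X → u ∈ Odds G (c u)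
  P8 : ∀ u, u ∉ O → lam u = MLabel.Z → u ∈ c u
  P9 : ∀ u, u ∉ O → lam u = MLabel.Y → Xor' (u ∈ c u) (u ∈ Odds G (c u))

/-- Focussing conditions (F1)-(F3). -/
def Focussed (G : SimpleGraph V) [DecidableRel G.Adj]
    (O : Finset V) (lam : V → MLabel) (c : V → Finset V) : Prop :=
  ∀ v, v ∉ O →
    (∀ w, w ∉ O → w ≠ v → w ∈ c v →
      lam w = MLabel.XY ∨ lam w = MLabel.X ∨ lam w = MLabel.Y) ∧
    (∀ w, w ∉ O → w ≠ v → w ∈ Odds G (c v) →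
      lam w = MLabel.XZ ∨ lam w = MLabel.YZ ∨ lam w = MLabel.Y ∨ lam w = MLabel.Z) ∧
    (∀ w, w ∉ O → w ≠ v → lam w = MLabel.Y → (w ∈ c v ↔ w ∈ Odds G (c v)))

/-- The reduced adjacency matrix over F₂: rows indexed by non-outputs, columns by non-inputs. -/
def redAdj (G : SimpleGraph V) [DecidableRel G.Adj] (I O : Finset V) :
    Matrix {v : V // v ∉ O} {v : V // v ∉ I} (ZMod 2) :=
  Matrix.of fun v u => if G.Adj v.val u.val then 1 else 0

/-- The subgraph of `G` induced on the vertices satisfying `p`. -/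
def inducedGraph (G : SimpleGraph V) (p : V → Prop) : SimpleGraph {v : V // p v} :=
  G.comap Subtype.val

instance (G : SimpleGraph V) [h : DecidableRel G.Adj] (p : V → Prop) :
    DecidableRel (inducedGraph G p).Adj := fun a b => h a.val b.val

lemma mem_image_val' {p : V → Prop} (A : Finset {v // p v}) (x : {v // p v}) :
    x.val ∈ A.image Subtype.val ↔ x ∈ A := by
  constructor
  · intro h
    obtain ⟨a, ha, hax⟩ := Finset.mem_image.mp h
    rwa [Subtype.val_injective hax] at ha
  · intro h; exact Finset.mem_image.mpr ⟨x, h, rfl⟩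

lemma odds_induced (G : SimpleGraph V) [DecidableRel G.Adj] (p : V → Prop) [DecidablePred p]
    (A : Finset {v // p v}) (v : {v // p v}) :
    v ∈ Odds (inducedGraph G p) A ↔ v.val ∈ Odds G (A.image Subtype.val) := by
  simp only [Odds, Finset.mem_filter, Finset.mem_univ, true_and]
  have himg : A.image Subtype.val ∩ G.neighborFinset v.val =
      (A ∩ (inducedGraph G p).neighborFinset v).image Subtype.val := by
    ext x
    simp only [Finset.mem_inter, Finset.mem_image, SimpleGraph.mem_neighborFinset]
    constructor
    · rintro ⟨⟨w, hwA, rfl⟩, hadj⟩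
      exact ⟨w, ⟨hwA, hadj⟩, rfl⟩
    · rintro ⟨w, ⟨hwA, hadj⟩, rfl⟩
      exact ⟨⟨w, hwA, rfl⟩, hadj⟩
  rw [himg, Finset.card_image_of_injective _ Subtype.val_injective]

/-- A labelled open graph has a Pauli flow iff the open graph obtained by
deleting the vertices in `I ∩ O` (with inputs `I∖O` and outputs `O∖I`, and the
restricted labelling) has a Pauli flow. -/
theorem pauliFlow_iff_remove_inputs_cap_outputs (G : SimpleGraph V)
    [DecidableRel G.Adj] (I O : Finset V) (lam : V → MLabel) :
    (∃ (c : V → Finset V) (prec : V → V → Prop), PauliFlow G I O lam c prec) ↔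
    (∃ (c : {v : V // v ∉ I ∩ O} → Finset {v : V // v ∉ I ∩ O})
        (prec : {v : V // v ∉ I ∩ O} → {v : V // v ∉ I ∩ O} → Prop),
      PauliFlow (inducedGraph G (fun v => v ∉ I ∩ O))
        ((I \ O).subtype (fun v => v ∉ I ∩ O)) ((O \ I).subtype (fun v => v ∉ I ∩ O))
        (fun v => lam v.val) c prec) := by
  set p : V → Prop := fun v => v ∉ I ∩ O with hp
  have hO : ∀ u : {v : V // p v},
      (u ∉ (O \ I).subtype p ↔ u.val ∉ O) := by
    intro u
    have hu := u.prop
    simp only [hp, Finset.mem_inter, not_and] at hu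
    simp only [Finset.mem_subtype, Finset.mem_sdiff, not_and, not_not]
    constructor
    · intro h hO'
      exact hu (h hO') hO'
    · intro h hO'
      exact absurd hO' h
  have hI : ∀ u : {v : V // p v},
      (u ∉ (I \ O).subtype p ↔ u.val ∉ I) := by
    intro u
    have hu := u.prop
    simp only [hp, Finset.mem_inter, not_and] at hu
    simp only [Finset.mem_subtype, Finset.mem_sdiff, not_and, not_not]
    constructor
    · intro h hI'
      exact hu hI' (h hI')
    · intro h hI'
      exact absurd hI' h
  constructor
  · rintro ⟨c, prec, pf⟩
    refine ⟨fun u => (c u.val).subtype p, fun u v => prec u.val v.val, ?_⟩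
    have hmemc : ∀ (u : V) (v : {v : V // p v}),
        v ∈ (c u).subtype p ↔ v.val ∈ c u := by
      intro u v; simp [Finset.mem_subtype]
    have himg : ∀ u : V, u ∉ O → ((c u).subtype p).image Subtype.val = c u := by
      intro u hu
      ext x
      simp only [Finset.mem_image, Finset.mem_subtype]
      constructor
      · rintro ⟨⟨y, hy⟩, hmem, rfl⟩; exact hmem
      · intro hx
        refine ⟨⟨x, ?_⟩, hx, rfl⟩
        intro hc
        exact pf.csub u hu x hx (Finset.mem_inter.mp hc).1
    have hodds : ∀ (u : V), u ∉ O → ∀ v : {v : V // p v},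
        (v ∈ Odds (inducedGraph G p) ((c u).subtype p) ↔ v.val ∈ Odds G (c u)) := by
      intro u hu v
      rw [odds_induced G p _ v, himg u hu]
    have hne : ∀ u v : {v : V // p v}, u ≠ v → u.val ≠ v.val := by
      intro u v h hv; exact h (Subtype.ext hv)
    refine
      { irrefl := fun u => pf.irrefl u.val
        trans := fun u v w h1 h2 => pf.trans _ _ _ h1 h2
        csub := ?_, P1 := ?_, P2 := ?_, P3 := ?_, P4 := ?_, P5 := ?_
        P6 := ?_, P7 := ?_, P8 := ?_, P9 := ?_ }
    · intro u hu v hv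
      rw [hI v]
      exact pf.csub u.val ((hO u).mp hu) v.val ((hmemc u.val v).mp hv)
    · intro u hu v hv hvO huv h1 h2
      exact pf.P1 u.val ((hO u).mp hu) v.val ((hmemc u.val v).mp hv)
        ((hO v).mp hvO) (hne u v huv) h1 h2
    · intro u hu v hv hvO huv h1 h2
      exact pf.P2 u.val ((hO u).mp hu) v.val
        ((hodds u.val ((hO u).mp hu) v).mp hv) ((hO v).mp hvO) (hne u v huv) h1 h2
    · intro u hu v hvO hnp huv hY
      rw [hmemc u.val v, hodds u.val ((hO u).mp hu) v]
      exact pf.P3 u.val ((hO u).mp hu) v.val ((hO v).mp hvO) hnp (hne u v huv) hY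
    · intro u hu hl
      have h := pf.P4 u.val ((hO u).mp hu) hl
      rw [hmemc u.val u, hodds u.val ((hO u).mp hu) u]
      exact h
    · intro u hu hl
      have h := pf.P5 u.val ((hO u).mp hu) hl
      rw [hmemc u.val u, hodds u.val ((hO u).mp hu) u]
      exact h
    · intro u hu hl
      have h := pf.P6 u.val ((hO u).mp hu) hl
      rw [hmemc u.val u, hodds u.val ((hO u).mp hu) u]
      exact h
    · intro u hu hl
      have h := pf.P7 u.val ((hO u).mp hu) hl
      rw [hodds u.val ((hO u).mp hu) u]
      exact h
    · intro u hu hl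
      have h := pf.P8 u.val ((hO u).mp hu) hl
      rw [hmemc u.val u]
      exact h
    · intro u hu hl
      have h := pf.P9 u.val ((hO u).mp hu) hl
      rw [hmemc u.val u, hodds u.val ((hO u).mp hu) u]
      exact h
  · rintro ⟨c, prec, pf⟩
    have hpd : ∀ u : V, u ∉ O → p u := by
      intro u hu hc
      exact hu (Finset.mem_inter.mp hc).2
    classical
    refine ⟨fun u => if h : p u then (c ⟨u, h⟩).image Subtype.val else ∅,
      fun u v => ∃ (hu : p u) (hv : p v), prec ⟨u, hu⟩ ⟨v, hv⟩, ?_⟩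
    have hmemc : ∀ (u : V) (hu : p u) (v : {v : V // p v}),
        (v.val ∈ if h : p u then (c ⟨u, h⟩).image Subtype.val else ∅) ↔ v ∈ c ⟨u, hu⟩ := by
      intro u hu v
      rw [dif_pos hu]
      exact mem_image_val' _ v
    have hmemc' : ∀ (u : V) (hu : p u) (v : V),
        v ∈ (if h : p u then (c ⟨u, h⟩).image Subtype.val else ∅) →
          ∃ hv : p v, (⟨v, hv⟩ : {v : V // p v}) ∈ c ⟨u, hu⟩ := by
      intro u hu v hv
      rw [dif_pos hu] at hv
      obtain ⟨w, hw, rfl⟩ := Finset.mem_image.mp hv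
      exact ⟨w.prop, hw⟩
    have hodds : ∀ (u : V) (hu : p u) (v : {v : V // p v}),
        (v.val ∈ Odds G (if h : p u then (c ⟨u, h⟩).image Subtype.val else ∅) ↔
          v ∈ Odds (inducedGraph G p) (c ⟨u, hu⟩)) := by
      intro u hu v
      rw [dif_pos hu, odds_induced G p _ v]
    refine
      { irrefl := ?_, trans := ?_,
        csub := ?_, P1 := ?_, P2 := ?_, P3 := ?_, P4 := ?_, P5 := ?_
        P6 := ?_, P7 := ?_, P8 := ?_, P9 := ?_ }
    · rintro u ⟨hu, hu', h⟩
      exact pf.irrefl _ h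
    · rintro u v w ⟨hu, hv, h1⟩ ⟨hv', hw, h2⟩
      exact ⟨hu, hw, pf.trans _ _ _ h1 h2⟩
    · intro u hu v hv
      obtain ⟨hvp, hmem⟩ := hmemc' u (hpd u hu) v hv
      have := pf.csub ⟨u, hpd u hu⟩ ((hO _).mpr hu) _ hmem
      exact (hI ⟨v, hvp⟩).mp this
    · intro u hu v hv hvO huv h1 h2
      obtain ⟨hvp, hmem⟩ := hmemc' u (hpd u hu) v hv
      exact ⟨hpd u hu, hvp,
        pf.P1 _ ((hO _).mpr hu) _ hmem ((hO _).mpr hvO)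
          (fun h => huv (congrArg Subtype.val h)) h1 h2⟩
    · intro u hu v hv hvO huv h1 h2
      have hvp : p v := hpd v hvO
      have hmem := (hodds u (hpd u hu) ⟨v, hvp⟩).mp hv
      exact ⟨hpd u hu, hvp,
        pf.P2 _ ((hO _).mpr hu) _ hmem ((hO _).mpr hvO)
          (fun h => huv (congrArg Subtype.val h)) h1 h2⟩
    · intro u hu v hvO hnp huv hY
      have hup : p u := hpd u hu
      have hvp : p v := hpd v hvO
      have hnp' : ¬ prec ⟨u, hup⟩ ⟨v, hvp⟩ := fun h => hnp ⟨hup, hvp, h⟩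
      have := pf.P3 ⟨u, hup⟩ ((hO _).mpr hu) ⟨v, hvp⟩ ((hO _).mpr hvO) hnp'
        (fun h => huv (congrArg Subtype.val h)) hY
      rw [show v = (⟨v, hvp⟩ : {v : V // p v}).val from rfl,
        hmemc u hup ⟨v, hvp⟩, hodds u hup ⟨v, hvp⟩]
      exact this
    · intro u hu hl
      have hup : p u := hpd u hu
      have h := pf.P4 ⟨u, hup⟩ ((hO _).mpr hu) hl
      rw [show u = (⟨u, hup⟩ : {v : V // p v}).val from rfl,
        hmemc u hup ⟨u, hup⟩, hodds u hup ⟨u, hup⟩]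
      exact h
    · intro u hu hl
      have hup : p u := hpd u hu
      have h := pf.P5 ⟨u, hup⟩ ((hO _).mpr hu) hl
      rw [show u = (⟨u, hup⟩ : {v : V // p v}).val from rfl,
        hmemc u hup ⟨u, hup⟩, hodds u hup ⟨u, hup⟩]
      exact h
    · intro u hu hl
      have hup : p u := hpd u hu
      have h := pf.P6 ⟨u, hup⟩ ((hO _).mpr hu) hl
      rw [show u = (⟨u, hup⟩ : {v : V // p v}).val from rfl,
        hmemc u hup ⟨u, hup⟩, hodds u hup ⟨u, hup⟩]
      exact h
    · intro u hu hl
      have hup : p u := hpd u hu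
      have h := pf.P7 ⟨u, hup⟩ ((hO _).mpr hu) hl
      rw [show u = (⟨u, hup⟩ : {v : V // p v}).val from rfl, hodds u hup ⟨u, hup⟩]
      exact h
    · intro u hu hl
      have hup : p u := hpd u hu
      have h := pf.P8 ⟨u, hup⟩ ((hO _).mpr hu) hl
      rw [show u = (⟨u, hup⟩ : {v : V // p v}).val from rfl, hmemc u hup ⟨u, hup⟩]
      exact h
    · intro u hu hl
      have hup : p u := hpd u hu
      have h := pf.P9 ⟨u, hup⟩ ((hO _).mpr hu) hl
      rw [show u = (⟨u, hup⟩ : {v : V // p v}).val from rfl,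
        hmemc u hup ⟨u, hup⟩, hodds u hup ⟨u, hup⟩]
      exact h
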